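/- If L is a trim lattice, then every interval [y,z] of L is trim. -/

import Mathlib

variable {α : Type*}

/-- An element is join-irreducible if it is not the minimum and is not a join
of two strictly smaller elements. -/
def JoinIrred [Lattice α] (a : α) : Prop :=
  ¬ IsBot a ∧ ∀ b c : α, b < a → c < a → b ⊔ c ≠ a

/-- An element is meet-irreducible if it is not the maximum and is not a meet
of two strictly larger elements. -/
def MeetIrred [Lattice α] (a : α) : Prop :=
  ¬ IsTop a ∧ ∀ b c : α, a < b → a < c → b ⊓ c ≠ a

/-- An element `x` is left modular if `(y ⊔ x) ⊓ z = y ⊔ (x ⊓ z)` for all `y < z`. -/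
def LeftModular [Lattice α] (x : α) : Prop :=
  ∀ y z : α, y < z → (y ⊔ x) ⊓ z = y ⊔ (x ⊓ z)

/-- A maximal chain `⊥ = x 0 ⋖ x 1 ⋖ ⋯ ⋖ x n = ⊤` all of whose elements are left modular. -/
def IsLMChain [Lattice α] {n : ℕ} (x : Fin (n + 1) → α) : Prop :=
  IsBot (x 0) ∧ IsTop (x (Fin.last n)) ∧ (∀ i : Fin n, x i.castSucc ⋖ x i.succ) ∧
    ∀ i, LeftModular (x i)

/-- A finite lattice is trim if it has a left modular maximal chain of `n + 1` elements,
exactly `n` join-irreducibles and exactly `n` meet-irreducibles. -/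
def Trim (α : Type*) [Lattice α] [Finite α] : Prop :=
  ∃ (n : ℕ) (x : Fin (n + 1) → α), IsLMChain x ∧
    Nat.card {v : α // JoinIrred v} = n ∧ Nat.card {v : α // MeetIrred v} = n

/-! Project the left modular chain `x` of `L` into `[y, z]` by `a ↦ y ⊔ (a ⊓ z)`. Left
modularity makes the projections left modular in the interval and turns each cover
`x k ⋖ x (k+1)` into an equality or a cover, so after deleting repetitions they form a maximal
left modular chain of `[y, z]`, of some length `m`. Every cover of a maximal chain is entered by a
join-irreducible, which gives at least `m` of them. Conversely, a join-irreducible `v` of `[y, z]`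
enters the chain at the projection of some cover `x k ⋖ x (k+1)`, and then `v = y ⊔ j` for a
join-irreducible `j` of `L` entering `x` at step `k`. As `L` has only `n` join-irreducibles, there
is exactly one such `j` for each `k`, so each step of the chain of `[y, z]` is entered by at most
one join-irreducible. Dually `v = z ⊓ q` for meet-irreducibles. -/

variable {m n : ℕ}

theorem Fin.exists_not_castSucc_and_succ {p : Fin (m + 1) → Prop} (h0 : ¬ p 0)
    (hm : p (Fin.last m)) : ∃ i : Fin m, ¬ p i.castSucc ∧ p i.succ := by
  induction m with
  | zero => exact absurd hm h0
  | succ m ih =>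
    by_cases hp : p (Fin.last m).castSucc
    · obtain ⟨i, hi⟩ := ih (p := p ∘ Fin.castSucc) h0 hp
      exact ⟨i.castSucc, hi.1, by rw [Fin.succ_castSucc]; exact hi.2⟩
    · exact ⟨Fin.last m, hp, hm⟩

theorem Fin.eq_of_not_castSucc_and_succ {p : Fin (m + 1) → Prop} (hp : Monotone p)
    {i i' : Fin m} (hi : ¬ p i.castSucc ∧ p i.succ) (hi' : ¬ p i'.castSucc ∧ p i'.succ) :
    i = i' := by
  by_contra hne
  rcases lt_or_gt_of_ne hne with h | h
  · exact hi'.1 (hp (Fin.succ_le_castSucc_iff.2 h) hi.2)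
  · exact hi.1 (hp (Fin.succ_le_castSucc_iff.2 h) hi'.2)

/- A monotone predicate `p a` along a chain switches on at a single step `i`, the level of `a`:
`p a i := a ≤ c i` for join-irreducibles and `p a i := ¬ c i ≤ a` for meet-irreducibles. -/
section Levels

variable {P : α → Prop} {p : α → Fin (m + 1) → Prop}

theorem exists_injective_of_levels (hp : ∀ a, Monotone (p a))
    (hex : ∀ i : Fin m, ∃ a, P a ∧ ¬ p a i.castSucc ∧ p a i.succ) :
    ∃ f : Fin m → {a // P a}, Function.Injective f ∧
      ∀ i, ¬ p (f i) i.castSucc ∧ p (f i) i.succ := by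
  choose f hP hflip using hex
  refine ⟨fun i => ⟨f i, hP i⟩, fun i i' h => ?_, hflip⟩
  have hfi : f i = f i' := congrArg Subtype.val h
  exact Fin.eq_of_not_castSucc_and_succ (hp (f i)) (hflip i) (hfi ▸ hflip i')

theorem le_card_of_levels [Finite α] (hp : ∀ a, Monotone (p a))
    (hex : ∀ i : Fin m, ∃ a, P a ∧ ¬ p a i.castSucc ∧ p a i.succ) :
    m ≤ Nat.card {a // P a} := by
  obtain ⟨f, hf, -⟩ := exists_injective_of_levels hp hex
  simpa using Nat.card_le_card_of_injective f hf

theorem eq_of_levels_of_card [Finite α] (hp : ∀ a, Monotone (p a))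
    (hex : ∀ i : Fin m, ∃ a, P a ∧ ¬ p a i.castSucc ∧ p a i.succ)
    (hcard : Nat.card {a // P a} = m) {i : Fin m} {a a' : α} (ha : P a) (ha' : P a')
    (hai : ¬ p a i.castSucc ∧ p a i.succ) (ha'i : ¬ p a' i.castSucc ∧ p a' i.succ) : a = a' := by
  obtain ⟨f, hf, hflip⟩ := exists_injective_of_levels hp hex
  have hsurj := (hf.bijective_of_nat_card_le (by simp [hcard])).2
  have eq_at_level (b : α) (hb : P b) (hbi : ¬ p b i.castSucc ∧ p b i.succ) : b = f i := by
    obtain ⟨k, hk⟩ := hsurj ⟨b, hb⟩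
    have hfk : (f k : α) = b := congrArg Subtype.val hk
    obtain rfl : k = i := Fin.eq_of_not_castSucc_and_succ (hp b) (hfk ▸ hflip k) hbi
    exact hfk.symm
  exact (eq_at_level a ha hai).trans (eq_at_level a' ha' ha'i).symm

theorem card_le_of_levels [Finite α] (h0 : ∀ a, P a → ¬ p a 0)
    (hlast : ∀ a, P a → p a (Fin.last m))
    (huniq : ∀ (i : Fin m) (a a' : α), P a → P a' → ¬ p a i.castSucc ∧ p a i.succ →
      ¬ p a' i.castSucc ∧ p a' i.succ → a = a') :
    Nat.card {a // P a} ≤ m := by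
  choose g hg using fun a : {a // P a} => Fin.exists_not_castSucc_and_succ (h0 a a.2) (hlast a a.2)
  have hg_inj : Function.Injective g := fun a a' h =>
    Subtype.ext (huniq _ _ _ a.2 a'.2 (hg a) (h ▸ hg a'))
  simpa using Nat.card_le_card_of_injective g hg_inj

end Levels

section FiniteLattice

variable [Lattice α] [Finite α]

theorem exists_joinIrred_le_not_le {a b : α} (h : ¬ b ≤ a) :
    ∃ j, JoinIrred j ∧ ¬ j ≤ a ∧ j ≤ b := by
  obtain ⟨j, hj⟩ := (Set.toFinite {j | j ≤ b ∧ ¬ j ≤ a}).exists_minimal ⟨b, le_rfl, h⟩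
  obtain ⟨hjb, hja⟩ := hj.prop
  have below (s : α) (hs : s < j) : s ≤ a :=
    by_contra fun hsa => hj.not_lt ⟨hs.le.trans hjb, hsa⟩ hs
  refine ⟨j, ⟨fun hbot => hja (hbot a), fun s t hs ht hst => hja ?_⟩, hja, hjb⟩
  exact hst ▸ sup_le (below s hs) (below t ht)

theorem exists_meetIrred_ge_not_ge {a b : α} (h : ¬ b ≤ a) :
    ∃ q, MeetIrred q ∧ a ≤ q ∧ ¬ b ≤ q := by
  obtain ⟨q, hq, hbq, haq⟩ :=
    exists_joinIrred_le_not_le (a := OrderDual.toDual b) (b := OrderDual.toDual a) h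
  exact ⟨q, hq, haq, hbq⟩

theorem exists_joinIrred_sup_eq {y v t : α} (hyv : y ≠ v)
    (hv : ∀ s u, y ≤ s → y ≤ u → s < v → u < v → s ⊔ u ≠ v) (ht : y ⊔ t = v) :
    ∃ j ≤ t, JoinIrred j ∧ y ⊔ j = v := by
  obtain ⟨j, hj⟩ := (Set.toFinite {j | j ≤ t ∧ y ⊔ j = v}).exists_minimal ⟨t, le_rfl, ht⟩
  obtain ⟨hjt, hyj⟩ := hj.prop
  have below (s : α) (hs : s < j) : y ⊔ s < v :=
    (hyj ▸ sup_le_sup_left hs.le y).lt_of_ne fun h => hj.not_lt ⟨hs.le.trans hjt, h⟩ hs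
  refine ⟨j, hjt, ⟨fun hbot => hyv ?_, fun s u hs hu hsu => ?_⟩, hyj⟩
  · rw [← hyj, sup_eq_left.2 (hbot y)]
  · refine hv _ _ le_sup_left le_sup_left (below s hs) (below u hu) ?_
    rw [sup_sup_sup_comm, sup_idem, hsu, hyj]

theorem exists_meetIrred_inf_eq {z v t : α} (hzv : z ≠ v)
    (hv : ∀ s u, s ≤ z → u ≤ z → v < s → v < u → s ⊓ u ≠ v) (ht : z ⊓ t = v) :
    ∃ q ≥ t, MeetIrred q ∧ z ⊓ q = v :=
  exists_joinIrred_sup_eq (α := αᵒᵈ) hzv hv ht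

variable {c : Fin (m + 1) → α}

theorem le_card_joinIrred (hc : StrictMono c) : m ≤ Nat.card {j : α // JoinIrred j} :=
  le_card_of_levels (p := fun j i => j ≤ c i) (fun _ _ _ hik hj => hj.trans (hc.monotone hik))
    fun i => exists_joinIrred_le_not_le (hc i.castSucc_lt_succ).not_ge

theorem le_card_meetIrred (hc : StrictMono c) : m ≤ Nat.card {q : α // MeetIrred q} :=
  le_card_of_levels (p := fun q i => ¬ c i ≤ q)
    (fun _ _ _ hik hq hcq => hq ((hc.monotone hik).trans hcq))
    fun i => by
      obtain ⟨q, hq, h1, h2⟩ := exists_meetIrred_ge_not_ge (hc i.castSucc_lt_succ).not_ge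
      exact ⟨q, hq, not_not.2 h1, h2⟩

theorem JoinIrred.eq_of_card_eq (hc : StrictMono c) (hJ : Nat.card {j : α // JoinIrred j} = m)
    {i : Fin m} {j j' : α} (hj : JoinIrred j) (hj' : JoinIrred j')
    (hji : ¬ j ≤ c i.castSucc ∧ j ≤ c i.succ) (hj'i : ¬ j' ≤ c i.castSucc ∧ j' ≤ c i.succ) :
    j = j' :=
  eq_of_levels_of_card (p := fun j i => j ≤ c i) (fun _ _ _ hik hj => hj.trans (hc.monotone hik))
    (fun i => exists_joinIrred_le_not_le (hc i.castSucc_lt_succ).not_ge) hJ hj hj' hji hj'i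

theorem MeetIrred.eq_of_card_eq (hc : StrictMono c) (hM : Nat.card {q : α // MeetIrred q} = m)
    {i : Fin m} {q q' : α} (hq : MeetIrred q) (hq' : MeetIrred q')
    (hqi : c i.castSucc ≤ q ∧ ¬ c i.succ ≤ q) (hq'i : c i.castSucc ≤ q' ∧ ¬ c i.succ ≤ q') :
    q = q' :=
  eq_of_levels_of_card (p := fun q i => ¬ c i ≤ q)
    (fun _ _ _ hik hq hcq => hq ((hc.monotone hik).trans hcq))
    (fun i => by
      obtain ⟨q, hq, h1, h2⟩ := exists_meetIrred_ge_not_ge (hc i.castSucc_lt_succ).not_ge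
      exact ⟨q, hq, not_not.2 h1, h2⟩)
    hM hq hq' ⟨not_not.2 hqi.1, hqi.2⟩ ⟨not_not.2 hq'i.1, hq'i.2⟩

end FiniteLattice

theorem exists_covBy_chain_of_wcovBy [PartialOrder α] :
    ∀ {n : ℕ} (W : Fin (n + 1) → α), (∀ k : Fin n, W k.castSucc ⩿ W k.succ) →
      ∃ (m : ℕ) (c : Fin (m + 1) → α), c 0 = W 0 ∧ c (Fin.last m) = W (Fin.last n) ∧
        ∀ i : Fin m, c i.castSucc ⋖ c i.succ ∧
          ∃ k : Fin n, c i.castSucc = W k.castSucc ∧ c i.succ = W k.succ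
  | 0, W, _ => ⟨0, W, rfl, rfl, fun i => i.elim0⟩
  | n + 1, W, hW => by
    obtain ⟨m, c, hc0, hcl, hc⟩ := exists_covBy_chain_of_wcovBy (W ∘ Fin.castSucc) fun k => by
      simpa only [Function.comp, Fin.succ_castSucc] using hW k.castSucc
    have lift (i : Fin m) :
        ∃ k : Fin (n + 1), c i.castSucc = W k.castSucc ∧ c i.succ = W k.succ := by
      obtain ⟨k, hk₁, hk₂⟩ := (hc i).2
      exact ⟨k.castSucc, hk₁, hk₂.trans (congrArg W (Fin.succ_castSucc k).symm)⟩
    by_cases hlast : W (Fin.last n).castSucc = W (Fin.last (n + 1))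
    · exact ⟨m, c, hc0, hcl.trans hlast, fun i => ⟨(hc i).1, lift i⟩⟩
    refine ⟨m + 1, Fin.snoc c (W (Fin.last (n + 1))), ?_, Fin.snoc_last ..,
      Fin.lastCases ?_ fun i => ?_⟩
    · simpa only [← Fin.castSucc_zero, Fin.snoc_castSucc, Function.comp] using hc0
    · simp only [Fin.succ_last, Fin.snoc_last, Fin.snoc_castSucc, hcl]
      exact ⟨(hW (Fin.last n)).covBy_of_ne hlast, Fin.last n, rfl, rfl⟩
    · rw [Fin.succ_castSucc, Fin.snoc_castSucc, Fin.snoc_castSucc]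
      exact ⟨(hc i).1, lift i⟩

theorem LeftModular.sup_inf_eq [Lattice α] {x u w : α} (hx : LeftModular x) (huw : u ≤ w) :
    (u ⊔ x) ⊓ w = u ⊔ (x ⊓ w) := by
  rcases huw.lt_or_eq with huw | rfl
  · exact hx u w huw
  · rw [inf_eq_right.2 le_sup_left, sup_eq_left.2 inf_le_right]

section Interval

variable [Lattice α] {y z : α} (hyz : y ≤ z)

def intervalProj (a : α) : Set.Icc y z :=
  ⟨y ⊔ (a ⊓ z), le_sup_left, sup_le hyz inf_le_right⟩

theorem intervalProj_mono : Monotone (intervalProj hyz) := fun _ _ hab =>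
  sup_le_sup_left (inf_le_inf_right z hab) y

theorem IsBot.intervalProj {a : α} (ha : IsBot a) : IsBot (intervalProj hyz a) := fun u =>
  sup_le u.2.1 (inf_le_left.trans (ha u))

theorem IsTop.intervalProj {a : α} (ha : IsTop a) : IsTop (intervalProj hyz a) := fun u =>
  le_sup_of_le_right (le_inf (ha u) u.2.2)

theorem LeftModular.sup_inf_inf {x w : α} (hx : LeftModular x) (hyw : y ≤ w) (hwz : w ≤ z) :
    (y ⊔ (x ⊓ z)) ⊓ w = y ⊔ (x ⊓ w) := by
  rw [← hx.sup_inf_eq (hyw.trans hwz), inf_assoc, inf_eq_right.2 hwz, hx.sup_inf_eq hyw]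

theorem LeftModular.intervalProj {x : α} (hx : LeftModular x) :
    LeftModular (intervalProj hyz x) := fun u w huw => Subtype.ext <| by
  have hu : y ≤ (u : α) := u.2.1
  change ((u : α) ⊔ (y ⊔ (x ⊓ z))) ⊓ w = (u : α) ⊔ ((y ⊔ (x ⊓ z)) ⊓ w)
  rw [← sup_assoc, sup_eq_left.2 hu, hx.sup_inf_inf (y := (u : α)) huw.le w.2.2,
    hx.sup_inf_inf w.2.1 w.2.2, ← sup_assoc, sup_eq_left.2 hu]

theorem CovBy.intervalProj_wcovBy {a b : α} (hab : a ⋖ b) (ha : LeftModular a)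
    (hb : LeftModular b) : intervalProj hyz a ⩿ intervalProj hyz b := by
  refine ⟨intervalProj_mono hyz hab.le, fun u hau hub => ?_⟩
  have hau' : y ⊔ (a ⊓ z) < u := hau
  have hub' : (u : α) < y ⊔ (b ⊓ z) := hub
  rcases hab.eq_or_eq (le_sup_left : a ≤ a ⊔ (u ⊓ b)) (sup_le hab.le inf_le_right) with h | h
  · refine hau'.not_ge ?_
    calc (u : α) = (y ⊔ b) ⊓ u :=
          (inf_eq_right.2 (hub'.le.trans (sup_le_sup_left inf_le_left y))).symm
      _ = y ⊔ (b ⊓ u) := hb.sup_inf_eq u.2.1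
      _ ≤ y ⊔ (a ⊓ z) := sup_le_sup_left
          (le_inf (inf_comm b u ▸ sup_eq_left.1 h) (inf_le_right.trans u.2.2)) y
  · refine hub'.not_ge ?_
    calc y ⊔ (b ⊓ z) ≤ ((u : α) ⊔ a) ⊓ z := sup_le (le_inf (u.2.1.trans le_sup_left) hyz)
          (inf_le_inf_right z (h ▸ sup_le le_sup_right (inf_le_left.trans le_sup_left)))
      _ = (u : α) ⊔ (a ⊓ z) := ha.sup_inf_eq u.2.2
      _ = u := sup_eq_left.2 (le_sup_right.trans hau'.le)

variable [Finite α]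

theorem exists_joinIrred_of_le_intervalProj {a b : α} (hb : LeftModular b) {v : Set.Icc y z}
    (hv : JoinIrred v) (hva : ¬ v ≤ intervalProj hyz a) (hvb : v ≤ intervalProj hyz b) :
    ∃ j, JoinIrred j ∧ ¬ j ≤ a ∧ j ≤ b ∧ y ⊔ j = v := by
  have hyv : y ≠ v := fun h => hva (show (v : α) ≤ y ⊔ (a ⊓ z) from h ▸ le_sup_left)
  have hvb' : (v : α) ≤ y ⊔ b := (show (v : α) ≤ y ⊔ (b ⊓ z) from hvb).trans
    (sup_le_sup_left inf_le_left y)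
  obtain ⟨j, hjt, hj, hyj⟩ := exists_joinIrred_sup_eq hyv
    (fun s u hs hu hsv huv hsu => hv.2 ⟨s, hs, hsv.le.trans v.2.2⟩ ⟨u, hu, huv.le.trans v.2.2⟩
      hsv huv (Subtype.ext hsu))
    ((hb.sup_inf_eq v.2.1).symm.trans (inf_eq_right.2 hvb'))
  refine ⟨j, hj, fun hja => hva ?_, hjt.trans inf_le_left, hyj⟩
  change (v : α) ≤ y ⊔ (a ⊓ z)
  exact hyj ▸ sup_le_sup_left (le_inf hja ((hjt.trans inf_le_right).trans v.2.2)) y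

theorem exists_meetIrred_of_intervalProj_le {a b : α} (ha : LeftModular a) {v : Set.Icc y z}
    (hv : MeetIrred v) (hav : intervalProj hyz a ≤ v) (hbv : ¬ intervalProj hyz b ≤ v) :
    ∃ q, MeetIrred q ∧ a ≤ q ∧ ¬ b ≤ q ∧ z ⊓ q = v := by
  have hav' : y ⊔ (a ⊓ z) ≤ v := hav
  have hzv : z ≠ v := fun h => hbv (show y ⊔ (b ⊓ z) ≤ v from h ▸ sup_le hyz inf_le_right)
  obtain ⟨q, htq, hq, hzq⟩ := exists_meetIrred_inf_eq hzv
    (fun s u hs hu hvs hvu hsu => hv.2 ⟨s, v.2.1.trans hvs.le, hs⟩ ⟨u, v.2.1.trans hvu.le, hu⟩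
      hvs hvu (Subtype.ext hsu))
    (show z ⊓ (a ⊔ v) = v by
      rw [inf_comm, sup_comm, ha.sup_inf_eq v.2.2, sup_eq_left.2 (le_sup_right.trans hav')])
  refine ⟨q, hq, le_sup_left.trans htq, fun hbq => hbv ?_, hzq⟩
  change y ⊔ (b ⊓ z) ≤ v
  exact sup_le v.2.1 (hzq ▸ le_inf inf_le_right (inf_le_left.trans hbq))

end Interval

theorem IsLMChain.strictMono [Lattice α] {x : Fin (n + 1) → α} (hx : IsLMChain x) :
    StrictMono x :=
  Fin.strictMono_iff_lt_succ.2 fun i => (hx.2.2.1 i).lt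

section IntervalCount

variable [Lattice α] [Finite α] {y z : α} (hyz : y ≤ z) {x : Fin (n + 1) → α}
  {c : Fin (m + 1) → Set.Icc y z}

theorem card_joinIrred_Icc_le (hx : IsLMChain x) (hJ : Nat.card {j : α // JoinIrred j} = n)
    (hc : IsLMChain c) (hcx : ∀ i : Fin m, ∃ k : Fin n,
      c i.castSucc = intervalProj hyz (x k.castSucc) ∧ c i.succ = intervalProj hyz (x k.succ)) :
    Nat.card {v : Set.Icc y z // JoinIrred v} ≤ m := by
  refine card_le_of_levels (p := fun v i => v ≤ c i)
    (fun v hv hv0 => hv.1 fun u => hv0.trans (hc.1 u))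
    (fun v _ => hc.2.1 v) fun i v w hv hw hvi hwi => ?_
  obtain ⟨k, hk₁, hk₂⟩ := hcx i
  obtain ⟨j, hj, hja, hjb, hyj⟩ :=
    exists_joinIrred_of_le_intervalProj hyz (hx.2.2.2 _) hv (hk₁ ▸ hvi.1) (hk₂ ▸ hvi.2)
  obtain ⟨j', hj', hj'a, hj'b, hyj'⟩ :=
    exists_joinIrred_of_le_intervalProj hyz (hx.2.2.2 _) hw (hk₁ ▸ hwi.1) (hk₂ ▸ hwi.2)
  obtain rfl := JoinIrred.eq_of_card_eq hx.strictMono hJ hj hj' ⟨hja, hjb⟩ ⟨hj'a, hj'b⟩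
  exact Subtype.ext (hyj.symm.trans hyj')

theorem card_meetIrred_Icc_le (hx : IsLMChain x) (hM : Nat.card {q : α // MeetIrred q} = n)
    (hc : IsLMChain c) (hcx : ∀ i : Fin m, ∃ k : Fin n,
      c i.castSucc = intervalProj hyz (x k.castSucc) ∧ c i.succ = intervalProj hyz (x k.succ)) :
    Nat.card {v : Set.Icc y z // MeetIrred v} ≤ m := by
  refine card_le_of_levels (p := fun v i => ¬ c i ≤ v) (fun v _ h0 => h0 (hc.1 v))
    (fun v hv hvm => hv.1 fun u => (hc.2.1 u).trans hvm) fun i v w hv hw hvi hwi => ?_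
  obtain ⟨k, hk₁, hk₂⟩ := hcx i
  obtain ⟨q, hq, hqa, hqb, hzq⟩ := exists_meetIrred_of_intervalProj_le hyz (hx.2.2.2 _) hv
    (hk₁ ▸ not_not.1 hvi.1) (hk₂ ▸ hvi.2)
  obtain ⟨q', hq', hq'a, hq'b, hzq'⟩ := exists_meetIrred_of_intervalProj_le hyz (hx.2.2.2 _) hw
    (hk₁ ▸ not_not.1 hwi.1) (hk₂ ▸ hwi.2)
  obtain rfl := MeetIrred.eq_of_card_eq hx.strictMono hM hq hq' ⟨hqa, hqb⟩ ⟨hq'a, hq'b⟩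
  exact Subtype.ext (hzq.symm.trans hzq')

end IntervalCount

/-- Every interval of a trim lattice is trim. -/
theorem interval_trim [Lattice α] [Finite α] (h : Trim α) (y z : α) (hyz : y ≤ z) :
    Trim (Set.Icc y z) := by
  obtain ⟨n, x, hx, hJ, hM⟩ := h
  obtain ⟨m, c, hc0, hcm, hc⟩ := exists_covBy_chain_of_wcovBy (intervalProj hyz ∘ x) fun k =>
    (hx.2.2.1 k).intervalProj_wcovBy hyz (hx.2.2.2 _) (hx.2.2.2 _)
  have hcx : ∀ i, ∃ k, c i = intervalProj hyz (x k) :=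
    Fin.cases ⟨0, hc0⟩ fun i => let ⟨k, _, hk⟩ := (hc i).2; ⟨k.succ, hk⟩
  have hchain : IsLMChain c :=
    ⟨hc0 ▸ hx.1.intervalProj hyz, hcm ▸ hx.2.1.intervalProj hyz, fun i => (hc i).1,
      fun i => let ⟨k, hk⟩ := hcx i; hk ▸ (hx.2.2.2 k).intervalProj hyz⟩
  refine ⟨m, c, hchain, le_antisymm ?_ (le_card_joinIrred hchain.strictMono),
    le_antisymm ?_ (le_card_meetIrred hchain.strictMono)⟩
  · exact card_joinIrred_Icc_le hyz hx hJ hchain fun i => (hc i).2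
  · exact card_meetIrred_Icc_le hyz hx hM hchain fun i => (hc i).2
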